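/- Let M ∈ ℝ^{n×n} be nonzero, let M_r = U*Σ*(V*)^T satisfy the truncated-SVD hypotheses, and assume ‖M − M_r‖_F ≤ ‖M_r‖_F. Let m > 0 and define q_{ij} = m·((‖M^i‖² + ‖M_j‖²)/(4n‖M‖_F²) + |M_{ij}|/(2‖M‖_{1,1})). Then for all i, j ∈ [n]: m·σ_r²·‖(U*)^i‖·‖(V*)^j‖ ≤ 8·n·r·σ_1²·q_{ij}, where (U*)^i is the i-th row of U* and (V*)^j is the j-th row of V*. -/
import Mathlib


open Matrix

/-- Frobenius norm of a real matrix. -/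
noncomputable def frobNorm {n₁ n₂ : ℕ} (A : Matrix (Fin n₁) (Fin n₂) ℝ) : ℝ :=
  Real.sqrt (∑ i, ∑ j, (A i j) ^ 2)

/-- The LELA sampling weights `q_{ij}` for a square matrix `M` and sample budget `m`. -/
noncomputable def sampQ {n : ℕ} (M : Matrix (Fin n) (Fin n) ℝ) (m : ℝ) (i j : Fin n) : ℝ :=
  m * ((∑ k, (M i k) ^ 2 + ∑ k, (M k j) ^ 2) / (4 * n * frobNorm M ^ 2)
    + |M i j| / (2 * ∑ k, ∑ l, |M k l|))

set_option maxHeartbeats 1600000 in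
theorem stmt5 {n r : ℕ} (hr : 0 < r)
    (M : Matrix (Fin n) (Fin n) ℝ) (hM : M ≠ 0)
    (Ustar Vstar : Matrix (Fin n) (Fin r) ℝ) (σ : Fin r → ℝ)
    (hU : Ustarᵀ * Ustar = 1) (hV : Vstarᵀ * Vstar = 1)
    (hσmono : Antitone σ) (hσpos : ∀ k, 0 < σ k)
    (Mr : Matrix (Fin n) (Fin n) ℝ) (hMr : Mr = Ustar * Matrix.diagonal σ * Vstarᵀ)
    (hUperp : Ustarᵀ * (M - Mr) = 0) (hVperp : (M - Mr) * Vstar = 0)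
    (hnoise : frobNorm (M - Mr) ≤ frobNorm Mr)
    (m : ℝ) (hm : 0 < m) (i j : Fin n) :
    m * (σ ⟨r - 1, by omega⟩) ^ 2 *
        (Real.sqrt (∑ k, (Ustar i k) ^ 2) * Real.sqrt (∑ k, (Vstar j k) ^ 2)) ≤
      8 * n * r * (σ ⟨0, hr⟩) ^ 2 * sampQ M m i j := by
  have hn : 0 < n := i.pos
  set E : Matrix (Fin n) (Fin n) ℝ := M - Mr with hE
  -- transpose of Mr
  have hMrT : Mrᵀ = Vstar * Matrix.diagonal σ * Ustarᵀ := by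
    rw [hMr]
    simp [Matrix.transpose_mul, Matrix.diagonal_transpose, Matrix.mul_assoc]
  -- cross products vanish
  have hMrET : Mr * Eᵀ = 0 := by
    have h1 : Vstarᵀ * Eᵀ = 0 := by
      rw [← Matrix.transpose_mul, hVperp, Matrix.transpose_zero]
    rw [hMr, Matrix.mul_assoc, h1, Matrix.mul_zero]
  have hMrTE : Mrᵀ * E = 0 := by
    rw [hMrT, Matrix.mul_assoc, hUperp, Matrix.mul_zero]
  -- Gram matrices
  have hMrsq : Mr * Mrᵀ = Ustar * Matrix.diagonal (fun k => σ k * σ k) * Ustarᵀ := by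
    rw [hMrT, hMr]
    simp only [Matrix.mul_assoc]
    rw [← Matrix.mul_assoc Vstarᵀ Vstar, hV, Matrix.one_mul,
      ← Matrix.mul_assoc (Matrix.diagonal σ) (Matrix.diagonal σ),
      Matrix.diagonal_mul_diagonal]
  have hMrsq' : Mrᵀ * Mr = Vstar * Matrix.diagonal (fun k => σ k * σ k) * Vstarᵀ := by
    rw [hMrT, hMr]
    simp only [Matrix.mul_assoc]
    rw [← Matrix.mul_assoc Ustarᵀ Ustar, hU, Matrix.one_mul,
      ← Matrix.mul_assoc (Matrix.diagonal σ) (Matrix.diagonal σ),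
      Matrix.diagonal_mul_diagonal]
  -- diagonal entries
  have hdiag : ∀ (W : Matrix (Fin n) (Fin r) ℝ) (i : Fin n),
      (W * Matrix.diagonal (fun k => σ k * σ k) * Wᵀ) i i = ∑ k, σ k ^ 2 * (W i k) ^ 2 := by
    intro W i
    have : (W * Matrix.diagonal (fun k => σ k * σ k) * Wᵀ) i i
        = ∑ k, W i k * (σ k * σ k) * W i k := by
      simp [Matrix.mul_apply, Matrix.diagonal_apply, Finset.mul_sum, mul_ite, mul_zero,
        ite_mul, zero_mul, Finset.sum_ite_eq, Matrix.transpose_apply]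
    rw [this]
    exact Finset.sum_congr rfl fun k _ => by ring
  have hrowMr : ∑ l, (Mr i l) ^ 2 = ∑ k, σ k ^ 2 * (Ustar i k) ^ 2 := by
    have h1 : (Mr * Mrᵀ) i i = ∑ l, (Mr i l) ^ 2 := by
      simp [Matrix.mul_apply, Matrix.transpose_apply, sq]
    rw [← h1, hMrsq, hdiag]
  have hcolMr : ∑ k, (Mr k j) ^ 2 = ∑ k, σ k ^ 2 * (Vstar j k) ^ 2 := by
    have h1 : (Mrᵀ * Mr) j j = ∑ k, (Mr k j) ^ 2 := by
      simp [Matrix.mul_apply, Matrix.transpose_apply, sq]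
    rw [← h1, hMrsq', hdiag]
  -- row cross-term zero (for every row)
  have hrowcross : ∀ i : Fin n, ∑ l, Mr i l * E i l = 0 := by
    intro i
    have := congrFun (congrFun hMrET i) i
    simpa [Matrix.mul_apply, Matrix.transpose_apply] using this
  have hcolcross : ∑ k, Mr k j * E k j = 0 := by
    have := congrFun (congrFun hMrTE j) j
    simpa [Matrix.mul_apply, Matrix.transpose_apply] using this
  -- M entries decompose
  have hMe : ∀ i l, M i l = Mr i l + E i l := by
    intro i l; simp [hE]
  -- row sums of squares
  have hrow : ∀ i : Fin n, ∑ l, (M i l) ^ 2 = ∑ l, (Mr i l) ^ 2 + ∑ l, (E i l) ^ 2 := by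
    intro i
    have h1 : ∀ l, (M i l) ^ 2 = (Mr i l) ^ 2 + (E i l) ^ 2 + 2 * (Mr i l * E i l) := by
      intro l; rw [hMe i l]; ring
    rw [Finset.sum_congr rfl fun l _ => h1 l]
    rw [Finset.sum_add_distrib, Finset.sum_add_distrib, ← Finset.mul_sum, hrowcross i]
    ring
  have hcol : ∑ k, (M k j) ^ 2 = ∑ k, (Mr k j) ^ 2 + ∑ k, (E k j) ^ 2 := by
    have h1 : ∀ k, (M k j) ^ 2 = (Mr k j) ^ 2 + (E k j) ^ 2 + 2 * (Mr k j * E k j) := by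
      intro k; rw [hMe k j]; ring
    rw [Finset.sum_congr rfl fun k _ => h1 k]
    rw [Finset.sum_add_distrib, Finset.sum_add_distrib, ← Finset.mul_sum, hcolcross]
    ring
  -- abbreviations
  set a : ℝ := ∑ k, (Ustar i k) ^ 2 with ha_def
  set b : ℝ := ∑ k, (Vstar j k) ^ 2 with hb_def
  set σr : ℝ := σ ⟨r - 1, by omega⟩ with hσr_def
  set σ1 : ℝ := σ ⟨0, hr⟩ with hσ1_def
  have hσrpos : 0 < σr := hσpos _
  have hσ1pos : 0 < σ1 := hσpos _
  have hσr_le : ∀ k : Fin r, σr ≤ σ k := by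
    intro k
    refine hσmono (Fin.le_def.mpr ?_)
    simp only []
    omega
  have hσ1_ge : ∀ k : Fin r, σ k ≤ σ1 := by
    intro k
    refine hσmono (Fin.le_def.mpr ?_)
    simp only []
    omega
  have ha_nonneg : 0 ≤ a := Finset.sum_nonneg fun k _ => sq_nonneg _
  have hb_nonneg : 0 ≤ b := Finset.sum_nonneg fun k _ => sq_nonneg _
  -- row/col lower bounds
  have hRa : σr ^ 2 * a ≤ ∑ l, (M i l) ^ 2 := by
    rw [hrow i, hrowMr]
    have h1 : σr ^ 2 * a ≤ ∑ k, σ k ^ 2 * (Ustar i k) ^ 2 := by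
      rw [ha_def, Finset.mul_sum]
      refine Finset.sum_le_sum fun k _ => ?_
      have h2 : σr ^ 2 ≤ σ k ^ 2 := pow_le_pow_left₀ hσrpos.le (hσr_le k) 2
      exact mul_le_mul_of_nonneg_right h2 (sq_nonneg _)
    have h2 : 0 ≤ ∑ l, (E i l) ^ 2 := Finset.sum_nonneg fun l _ => sq_nonneg _
    linarith
  have hCb : σr ^ 2 * b ≤ ∑ k, (M k j) ^ 2 := by
    rw [hcol, hcolMr]
    have h1 : σr ^ 2 * b ≤ ∑ k, σ k ^ 2 * (Vstar j k) ^ 2 := by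
      rw [hb_def, Finset.mul_sum]
      refine Finset.sum_le_sum fun k _ => ?_
      have h2 : σr ^ 2 ≤ σ k ^ 2 := pow_le_pow_left₀ hσrpos.le (hσr_le k) 2
      exact mul_le_mul_of_nonneg_right h2 (sq_nonneg _)
    have h2 : 0 ≤ ∑ k, (E k j) ^ 2 := Finset.sum_nonneg fun k _ => sq_nonneg _
    linarith
  -- Frobenius norm of Mr
  have hcolU : ∀ k : Fin r, ∑ i, (Ustar i k) ^ 2 = 1 := by
    intro k
    have := congrFun (congrFun hU k) k
    simpa [Matrix.mul_apply, Matrix.transpose_apply, Matrix.one_apply, sq] using this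
  have hMrF : ∑ i, ∑ l, (Mr i l) ^ 2 = ∑ k, σ k ^ 2 := by
    have h1 : ∀ i : Fin n, ∑ l, (Mr i l) ^ 2 = ∑ k, σ k ^ 2 * (Ustar i k) ^ 2 := by
      intro i'
      have hx : (Mr * Mrᵀ) i' i' = ∑ l, (Mr i' l) ^ 2 := by
        simp [Matrix.mul_apply, Matrix.transpose_apply, sq]
      rw [← hx, hMrsq, hdiag]
    rw [Finset.sum_congr rfl fun i' _ => h1 i']
    rw [Finset.sum_comm]
    refine Finset.sum_congr rfl fun k _ => ?_
    rw [← Finset.mul_sum, hcolU k, mul_one]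
  have hMrF_le : ∑ i, ∑ l, (Mr i l) ^ 2 ≤ r * σ1 ^ 2 := by
    rw [hMrF]
    calc ∑ k, σ k ^ 2 ≤ ∑ _k : Fin r, σ1 ^ 2 := by
          refine Finset.sum_le_sum fun k _ => ?_
          have h1 := hσ1_ge k
          have h2 := hσpos k
          nlinarith
      _ = r * σ1 ^ 2 := by simp [Finset.sum_const]
  -- Frobenius norm of M
  set F : ℝ := ∑ i, ∑ l, (M i l) ^ 2 with hF_def
  have hFsplit : F = ∑ i, ∑ l, (Mr i l) ^ 2 + ∑ i, ∑ l, (E i l) ^ 2 := by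
    rw [hF_def, Finset.sum_congr rfl fun i' _ => hrow i', Finset.sum_add_distrib]
  have hEF_le : ∑ i, ∑ l, (E i l) ^ 2 ≤ ∑ i, ∑ l, (Mr i l) ^ 2 := by
    have h1 : 0 ≤ ∑ i, ∑ l, (E i l) ^ 2 :=
      Finset.sum_nonneg fun i' _ => Finset.sum_nonneg fun l _ => sq_nonneg _
    have h2 : 0 ≤ ∑ i, ∑ l, (Mr i l) ^ 2 :=
      Finset.sum_nonneg fun i' _ => Finset.sum_nonneg fun l _ => sq_nonneg _
    simp only [frobNorm] at hnoise
    have h3 : Real.sqrt (∑ i, ∑ l, (E i l) ^ 2) ≤ Real.sqrt (∑ i, ∑ l, (Mr i l) ^ 2) := hnoise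
    have h4 := pow_le_pow_left₀ (Real.sqrt_nonneg _) h3 2
    rwa [Real.sq_sqrt h1, Real.sq_sqrt h2] at h4
  have hF_le : F ≤ 2 * (r * σ1 ^ 2) := by
    rw [hFsplit]; linarith
  have hFpos : 0 < F := by
    obtain ⟨i0, j0, h0⟩ : ∃ i0 j0, M i0 j0 ≠ 0 := by
      by_contra h
      push_neg at h
      exact hM (by ext i0 j0; simpa using h i0 j0)
    have h1 : (M i0 j0) ^ 2 ≤ ∑ l, (M i0 l) ^ 2 :=
      Finset.single_le_sum (f := fun l => (M i0 l) ^ 2) (fun l _ => sq_nonneg _)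
        (Finset.mem_univ j0)
    have h2 : ∑ l, (M i0 l) ^ 2 ≤ F :=
      Finset.single_le_sum (f := fun i' => ∑ l, (M i' l) ^ 2)
        (fun i' _ => Finset.sum_nonneg fun l _ => sq_nonneg _) (Finset.mem_univ i0)
    have := pow_pos (abs_pos.mpr h0) 2
    calc (0:ℝ) < (M i0 j0) ^ 2 := by positivity
      _ ≤ F := le_trans h1 h2
  have hfrobM : frobNorm M ^ 2 = F := Real.sq_sqrt (le_of_lt hFpos)
  -- final arithmetic
  set R : ℝ := ∑ l, (M i l) ^ 2 with hR_def
  set C : ℝ := ∑ k, (M k j) ^ 2 with hC_def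
  clear_value a b σr σ1 F R C
  have hS_nonneg : 0 ≤ ∑ k, ∑ l, |M k l| :=
    Finset.sum_nonneg fun k _ => Finset.sum_nonneg fun l _ => abs_nonneg _
  have hq2 : 0 ≤ |M i j| / (2 * ∑ k, ∑ l, |M k l|) :=
    div_nonneg (abs_nonneg _) (by linarith)
  have hsampQ : sampQ M m i j
      = m * ((R + C) / (4 * n * F) + |M i j| / (2 * ∑ k, ∑ l, |M k l|)) := by
    simp only [sampQ]
    rw [hfrobM, hR_def, hC_def]
  rw [hsampQ]
  have hmain : m * σr ^ 2 * (Real.sqrt a * Real.sqrt b)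
      ≤ 8 * n * r * σ1 ^ 2 * (m * ((R + C) / (4 * n * F))) := by
    have hab : Real.sqrt a * Real.sqrt b ≤ (a + b) / 2 := by
      nlinarith [sq_nonneg (Real.sqrt a - Real.sqrt b), Real.sq_sqrt ha_nonneg,
        Real.sq_sqrt hb_nonneg]
    have hstep1 : m * σr ^ 2 * (Real.sqrt a * Real.sqrt b) ≤ m * σr ^ 2 * ((a + b) / 2) := by
      have : 0 ≤ m * σr ^ 2 := by positivity
      exact mul_le_mul_of_nonneg_left hab this
    refine le_trans hstep1 ?_
    have hrhs : 8 * (n:ℝ) * r * σ1 ^ 2 * (m * ((R + C) / (4 * n * F)))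
        = (8 * n * r * σ1 ^ 2 * m * (R + C)) / (4 * n * F) := by
      field_simp
    rw [hrhs, le_div_iff₀ (by positivity)]
    have h1 : σr ^ 2 * (a + b) ≤ R + C := by
      have := hRa; have := hCb
      rw [mul_add]; linarith
    have hRC0 : (0:ℝ) ≤ R + C := le_trans (by positivity) h1
    have hn1 : (1:ℝ) ≤ (n:ℝ) := by exact_mod_cast hn
    have hr1 : (1:ℝ) ≤ (r:ℝ) := by exact_mod_cast hr
    have t1 : 2 * (n:ℝ) * m * F * (σr ^ 2 * (a + b)) ≤ 2 * n * m * F * (R + C) :=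
      mul_le_mul_of_nonneg_left h1 (by positivity)
    have t2 : 2 * (n:ℝ) * m * (R + C) * F ≤ 2 * n * m * (R + C) * (2 * (r * σ1 ^ 2)) := by
      refine mul_le_mul_of_nonneg_left hF_le ?_
      have : (0:ℝ) ≤ 2 * (n:ℝ) * m := by positivity
      exact mul_nonneg this hRC0
    have t3 : (0:ℝ) ≤ (n:ℝ) * m * r * σ1 ^ 2 * (R + C) := by
      have : (0:ℝ) ≤ (n:ℝ) * m * r * σ1 ^ 2 := by positivity
      exact mul_nonneg this hRC0
    nlinarith [t1, t2, t3]
  calc m * σr ^ 2 * (Real.sqrt a * Real.sqrt b)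
      ≤ 8 * n * r * σ1 ^ 2 * (m * ((R + C) / (4 * n * F))) := hmain
    _ ≤ 8 * n * r * σ1 ^ 2 * (m * ((R + C) / (4 * n * F) + |M i j| / (2 * ∑ k, ∑ l, |M k l|))) := by
        have h8 : 0 ≤ 8 * (n:ℝ) * r * σ1 ^ 2 := by positivity
        have : m * ((R + C) / (4 * n * F)) ≤ m * ((R + C) / (4 * n * F) + |M i j| / (2 * ∑ k, ∑ l, |M k l|)) :=
          mul_le_mul_of_nonneg_left (le_add_of_nonneg_right hq2) hm.le
        exact mul_le_mul_of_nonneg_left this h8
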